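/- arXiv:2103.01172 — 2 statements merged into one kernel-verified Lean document; each statement's English description precedes it below -/
import Mathlib

section
/- Let Z, B, Y, C : ℝ → ℝ be continuous with Z(0)=B(0)=Y(0)=C(0)=0, B(t)-Z(t) → ∓∞ as t → ±∞, and C(t)-Y(t) → ∓∞ as t → ±∞. If Z = D⃖(Y,C) and B = R⃖(Y,C) (as functions), then Y = D(Z,B) and C = R(Z,B). -/
open Filter Set

/-- Forward queueing map `Q`. -/
noncomputable def Qf (Z B : ℝ → ℝ) (t : ℝ) : ℝ :=
  sSup ((fun s => (B s - B t) - (Z s - Z t)) '' Ici t)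

/-- Forward queueing map `D`. -/
noncomputable def Df (Z B : ℝ → ℝ) (t : ℝ) : ℝ := Z t + Qf Z B 0 - Qf Z B t

/-- Forward queueing map `R`. -/
noncomputable def Rf (Z B : ℝ → ℝ) (t : ℝ) : ℝ := B t + Qf Z B t - Qf Z B 0

/-- Backward queueing map `Q⃖`. -/
noncomputable def Qb (Y C : ℝ → ℝ) (t : ℝ) : ℝ :=
  sSup ((fun s => (C t - C s) - (Y t - Y s)) '' Iic t)

/-- Backward queueing map `D⃖`. -/
noncomputable def Db (Y C : ℝ → ℝ) (t : ℝ) : ℝ := Y t + Qb Y C t - Qb Y C 0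

/-- Backward queueing map `R⃖`. -/
noncomputable def Rb (Y C : ℝ → ℝ) (t : ℝ) : ℝ := C t + Qb Y C 0 - Qb Y C t

/-! With `f = Y - C` and its running maximum `F t = sup_{s ≤ t} f s`, the backward queue is
`Q⃖(Y,C) = F - f`. Substituting `Z = D⃖(Y,C)`, `B = R⃖(Y,C)` into the forward queue gives
`Q(Z,B)(t) = 2F(t) - f(t) - inf_{s ≥ t} (2F(s) - f(s))`. Since `f → +∞`, after time `t` the
continuous `f` first climbs back to the level `F t` at some `s` with `F s = F t`, so that
infimum is attained there and equals `F t`. Hence `Q(Z,B) = Q⃖(Y,C)`, and the forward maps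
undo the backward ones. -/

noncomputable def runningMax (f : ℝ → ℝ) (t : ℝ) : ℝ := sSup (f '' Iic t)

lemma bddAbove_image_Iic_of_tendsto_atBot {f : ℝ → ℝ} (hf : Continuous f)
    (hbot : Tendsto f atBot atBot) (t : ℝ) : BddAbove (f '' Iic t) := by
  obtain ⟨a, ha⟩ := eventually_atBot.1 (hbot.eventually (eventually_le_atBot 0))
  rw [← Iic_union_Icc_eq_Iic (min_le_right a t), image_union]
  refine BddAbove.union ⟨0, ?_⟩ (isCompact_Icc.bddAbove_image hf.continuousOn)
  rintro _ ⟨x, hx, rfl⟩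
  exact ha x (hx.trans (min_le_left a t))

section RunningMax

variable {f : ℝ → ℝ}

lemma le_runningMax {t : ℝ} (hbdd : BddAbove (f '' Iic t)) : f t ≤ runningMax f t :=
  le_csSup hbdd (mem_image_of_mem f self_mem_Iic)

lemma runningMax_mono (hbdd : ∀ t, BddAbove (f '' Iic t)) : Monotone (runningMax f) :=
  fun _ t hst => csSup_le_csSup (hbdd t) (nonempty_Iic.image f) (image_mono (Iic_subset_Iic.2 hst))

lemma exists_ge_eq_runningMax (hf : Continuous f) (hbdd : ∀ t, BddAbove (f '' Iic t))
    (htop : Tendsto f atTop atTop) (t : ℝ) :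
    ∃ s, t ≤ s ∧ f s = runningMax f t ∧ runningMax f s = runningMax f t := by
  set S := {x | t ≤ x ∧ runningMax f t ≤ f x}
  have hS_ne : S.Nonempty := by
    obtain ⟨u, hu⟩ := eventually_atTop.1 (htop.eventually (eventually_ge_atTop (runningMax f t)))
    exact ⟨max t u, le_max_left t u, hu _ (le_max_right t u)⟩
  have hS_bdd : BddBelow S := ⟨t, fun _ hx => hx.1⟩
  have hS_closed : IsClosed S :=
    (isClosed_le continuous_const continuous_id).inter (isClosed_le continuous_const hf)
  set s := sInf S
  obtain ⟨hts, hfs⟩ : s ∈ S := hS_closed.csInf_mem hS_ne hS_bdd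
  have below : Icc t s ⊆ {x | f x ≤ runningMax f t} := by
    rcases eq_or_lt_of_le hts with hts_eq | hts_lt
    · rw [← hts_eq, Icc_self, singleton_subset_iff]
      exact le_runningMax (hbdd t)
    have before_s : Ico t s ⊆ {x | f x ≤ runningMax f t} := fun x ⟨htx, hxs⟩ =>
      le_of_not_ge fun hx => (csInf_le hS_bdd ⟨htx, hx⟩).not_gt hxs
    rwa [← closure_Ico hts_lt.ne, (isClosed_le hf continuous_const).closure_subset_iff]
  refine ⟨s, hts, le_antisymm (below ⟨hts, le_rfl⟩) hfs, le_antisymm ?_ (runningMax_mono hbdd hts)⟩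
  refine csSup_le (nonempty_Iic.image f) ?_
  rintro _ ⟨x, hxs, rfl⟩
  rcases le_total x t with hxt | htx
  · exact le_csSup (hbdd t) (mem_image_of_mem f hxt)
  · exact below ⟨htx, hxs⟩

lemma isLeast_two_mul_runningMax_sub (hf : Continuous f) (hbdd : ∀ t, BddAbove (f '' Iic t))
    (htop : Tendsto f atTop atTop) (t : ℝ) :
    IsLeast ((fun s => 2 * runningMax f s - f s) '' Ici t) (runningMax f t) := by
  refine ⟨?_, ?_⟩
  · obtain ⟨s, hts, hfs, hFs⟩ := exists_ge_eq_runningMax hf hbdd htop t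
    exact ⟨s, hts, by dsimp only; rw [hfs, hFs]; ring⟩
  · rintro _ ⟨s, hts, rfl⟩
    have hfF := le_runningMax (hbdd s)
    have hFF := runningMax_mono hbdd hts
    dsimp only
    linarith

end RunningMax

section Queueing

variable {Y C : ℝ → ℝ}

lemma Qb_eq_runningMax_sub (t : ℝ) (hbdd : BddAbove ((Y - C) '' Iic t)) :
    Qb Y C t = runningMax (Y - C) t - (Y - C) t := by
  have himg : (fun s => (C t - C s) - (Y t - Y s)) '' Iic t
      = OrderIso.subRight ((Y - C) t) '' ((Y - C) '' Iic t) := by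
    rw [← image_comp]
    refine image_congr fun s _ => ?_
    simp only [Function.comp_apply, OrderIso.subRight_apply, Pi.sub_apply]
    ring
  rw [Qb, himg, ← OrderIso.map_csSup' _ (nonempty_Iic.image _) hbdd]
  rfl

lemma Qf_Db_Rb_eq_Qb (hf : Continuous (Y - C)) (hbdd : ∀ t, BddAbove ((Y - C) '' Iic t))
    (htop : Tendsto (Y - C) atTop atTop) (t : ℝ) :
    Qf (Db Y C) (Rb Y C) t = Qb Y C t := by
  set F := runningMax (Y - C)
  have hQb : ∀ t, Qb Y C t = F t - (Y - C) t := fun t => Qb_eq_runningMax_sub t (hbdd t)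
  have himg : (fun s => (Rb Y C s - Rb Y C t) - (Db Y C s - Db Y C t)) '' Ici t
      = (fun x => (2 * F t - (Y - C) t) - x) '' ((fun s => 2 * F s - (Y - C) s) '' Ici t) := by
    rw [← image_comp]
    refine image_congr fun s _ => ?_
    simp only [Function.comp_apply, Rb, Db, hQb, Pi.sub_apply]
    ring
  have hanti : Antitone fun x : ℝ => (2 * F t - (Y - C) t) - x := fun _ _ h => sub_le_sub_left h _
  rw [Qf, himg, (hanti.map_isLeast (isLeast_two_mul_runningMax_sub hf hbdd htop t)).csSup_eq, hQb]
  ring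

end Queueing

theorem inverse_queueing_maps_general (Z B Y C : ℝ → ℝ)
    (hYc : Continuous Y) (hCc : Continuous C)
    (hCYtop : Tendsto (fun t => C t - Y t) atTop atBot)
    (hCYbot : Tendsto (fun t => C t - Y t) atBot atTop)
    (hZ : Z = Db Y C) (hB : B = Rb Y C) :
    Y = Df Z B ∧ C = Rf Z B := by
  have htop : Tendsto (Y - C) atTop atTop := by
    rw [← tendsto_neg_atBot_iff]
    simpa using hCYtop
  have hbot : Tendsto (Y - C) atBot atBot := by
    rw [← tendsto_neg_atTop_iff]
    simpa using hCYbot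
  have hQ := Qf_Db_Rb_eq_Qb (hYc.sub hCc)
    (bddAbove_image_Iic_of_tendsto_atBot (hYc.sub hCc) hbot) htop
  subst hZ hB
  refine ⟨funext fun t => ?_, funext fun t => ?_⟩
  · simp only [Df, Db, hQ]
    ring
  · simp only [Rf, Rb, hQ]
    ring

/-- Theorem D.1 (one direction): if `Z = D⃖(Y,C)` and `B = R⃖(Y,C)`, then
`Y = D(Z,B)` and `C = R(Z,B)`. -/
theorem inverse_queueing_maps (Z B Y C : ℝ → ℝ)
    (hZc : Continuous Z) (hBc : Continuous B) (hYc : Continuous Y) (hCc : Continuous C)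
    (hZ0 : Z 0 = 0) (hB0 : B 0 = 0) (hY0 : Y 0 = 0) (hC0 : C 0 = 0)
    (hBZtop : Tendsto (fun t => B t - Z t) atTop atBot)
    (hBZbot : Tendsto (fun t => B t - Z t) atBot atTop)
    (hCYtop : Tendsto (fun t => C t - Y t) atTop atBot)
    (hCYbot : Tendsto (fun t => C t - Y t) atBot atTop)
    (hZ : Z = Db Y C) (hB : B = Rb Y C) :
    Y = Df Z B ∧ C = Rf Z B :=
  inverse_queueing_maps_general Z B Y C hYc hCc hCYtop hCYbot hZ hB
end

section
/- Let X = (X_m)_{m∈ℤ} be a family of continuous functions ℝ → ℝ, with last-passage values L_{(m,s),(n,t)}(X) = sup { Σ_{r=m}^n (X_r(s_r) - X_r(s_{r-1})) : s = s_{m-1} ≤ ⋯ ≤ s_n = t }. Then for 0 < s < t < u and m < n: 0 ≤ L_{(m,s),(n,t)}(X) - L_{(m+1,s),(n,t)}(X) ≤ L_{(m,s),(n,u)}(X) - L_{(m+1,s),(n,u)}(X). -/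
/-!
Paths from `(m, s)` and from `(m + 1, s)` both start at height `s`, so a path from `(m, s)` to
`(n, t)` and a path from `(m + 1, s)` to `(n, u)` with `t ≤ u` must cross. Exchanging their tails
after a crossing level gives a path from `(m, s)` to `(n, u)` and one from `(m + 1, s)`
to `(n, t)` with the same total energy, whence the submodularity
`L_{(m,s),(n,t)} + L_{(m+1,s),(n,u)} ≤ L_{(m,s),(n,u)} + L_{(m+1,s),(n,t)}`.
The lower bound holds because a path from `(m + 1, s)` extends to one from `(m, s)` with the same
energy by a vertical step at time `s`.
-/

open Filter Set

/-- A sequence `σ : ℤ → ℝ` encodes an up-right path from `(m,s)` to `(n,t)` via its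
jump times: `σ (m-1) = s`, `σ n = t`, and `σ` is nondecreasing on `[m-1, n]`. -/
def IsPath (m n : ℤ) (s t : ℝ) (σ : ℤ → ℝ) : Prop :=
  σ (m - 1) = s ∧ σ n = t ∧ ∀ r : ℤ, m - 1 ≤ r → r < n → σ r ≤ σ (r + 1)

/-- The energy collected by the path `σ` in the environment `X`:
`Σ_{r=m}^n (X_r(σ_r) - X_r(σ_{r-1}))`. -/
noncomputable def energy (X : ℤ → ℝ → ℝ) (m n : ℤ) (σ : ℤ → ℝ) : ℝ :=
  ∑ r ∈ Finset.Icc m n, (X r (σ r) - X r (σ (r - 1)))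

/-- The semi-discrete last-passage value `L_{(m,s),(n,t)}(X)`. -/
noncomputable def LPP (X : ℤ → ℝ → ℝ) (m : ℤ) (s : ℝ) (n : ℤ) (t : ℝ) : ℝ :=
  sSup (energy X m n '' {σ | IsPath m n s t σ})

section Paths

variable {m n : ℤ} {s t : ℝ} {σ : ℤ → ℝ}

theorem IsPath.mono (hσ : IsPath m n s t σ) {a b : ℤ} (ha : m - 1 ≤ a) (hab : a ≤ b)
    (hb : b ≤ n) : σ a ≤ σ b := by
  induction b, hab using Int.leInduction with
  | base => rfl
  | succ b hab ih => exact (ih (by omega)).trans (hσ.2.2 b (by omega) (by omega))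

theorem IsPath.mem_Icc (hσ : IsPath m n s t σ) {r : ℤ} (hr₁ : m - 1 ≤ r) (hr₂ : r ≤ n) :
    σ r ∈ Icc s t :=
  ⟨hσ.1 ▸ hσ.mono le_rfl hr₁ hr₂, hσ.2.1 ▸ hσ.mono hr₁ hr₂ le_rfl⟩

theorem exists_isPath (hmn : m ≤ n) (hst : s ≤ t) : ∃ σ, IsPath m n s t σ := by
  refine ⟨fun r => if r < n then s else t, by simp [show m - 1 < n by omega], by simp, ?_⟩
  intro r _ hr
  simp only [if_pos hr]
  split_ifs
  exacts [le_rfl, hst]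

theorem IsPath.update_pred (hσ : IsPath (m + 1) n s t σ) (hmn : m ≤ n) :
    IsPath m n s t (Function.update σ (m - 1) s) := by
  have hσm : Function.update σ (m - 1) s m = s := by
    simpa [Function.update_of_ne (show m ≠ m - 1 by omega)] using hσ.1
  refine ⟨by simp, by simpa [show n ≠ m - 1 by omega] using hσ.2.1, fun r hr₁ hr₂ => ?_⟩
  rcases hr₁.eq_or_lt with rfl | hr₁
  · simpa using hσm.ge
  · simpa [show r ≠ m - 1 by omega, show r + 1 ≠ m - 1 by omega] using
      hσ.2.2 r (by omega) hr₂

theorem IsPath.succ_of_apply_eq (hσ : IsPath m n s t σ) (hσm : σ m = s) :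
    IsPath (m + 1) n s t σ :=
  ⟨by simpa using hσm, hσ.2.1, fun r hr₁ hr₂ => hσ.2.2 r (by omega) hr₂⟩

end Paths

section Energy

variable (X : ℤ → ℝ → ℝ) {m n : ℤ}

theorem energy_congr {σ τ : ℤ → ℝ} (h : ∀ r, m - 1 ≤ r → r ≤ n → σ r = τ r) :
    energy X m n σ = energy X m n τ :=
  Finset.sum_congr rfl fun r hr => by
    rw [Finset.mem_Icc] at hr
    rw [h r (by omega) hr.2, h (r - 1) (by omega) (by omega)]

theorem energy_eq_add_energy_succ (hmn : m ≤ n) (σ : ℤ → ℝ) :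
    energy X m n σ = (X m (σ m) - X m (σ (m - 1))) + energy X (m + 1) n σ := by
  rw [energy, energy, ← Finset.add_sum_Ioc_eq_sum_Icc hmn, Finset.Icc_add_one_left_eq_Ioc]

theorem energy_eq_energy_succ (hmn : m ≤ n) {σ : ℤ → ℝ} (hσm : σ (m - 1) = σ m) :
    energy X m n σ = energy X (m + 1) n σ := by
  rw [energy_eq_add_energy_succ X hmn, hσm, sub_self, zero_add]

theorem energy_update_pred (hmn : m ≤ n) {s : ℝ} {τ : ℤ → ℝ} (hτm : τ m = s) :
    energy X m n (Function.update τ (m - 1) s) = energy X (m + 1) n τ := by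
  rw [energy_eq_energy_succ X hmn (by simp [Function.update_of_ne (show m ≠ m - 1 by omega), hτm])]
  exact energy_congr X fun r hr _ => Function.update_of_ne (by omega) _ _

theorem energy_le_sum_oscillation (hX : ∀ r, Continuous (X r)) {s t : ℝ} {σ : ℤ → ℝ}
    (hσ : IsPath m n s t σ) :
    energy X m n σ ≤ ∑ r ∈ Finset.Icc m n, (sSup (X r '' Icc s t) - sInf (X r '' Icc s t)) := by
  refine Finset.sum_le_sum fun r hr => ?_
  rw [Finset.mem_Icc] at hr
  have hcompact := (isCompact_Icc (a := s) (b := t)).image (hX r)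
  have hsup := le_csSup hcompact.bddAbove (mem_image_of_mem _ (hσ.mem_Icc (by omega) hr.2))
  have hinf := csInf_le hcompact.bddBelow
    (mem_image_of_mem _ (hσ.mem_Icc (by omega) (by omega) : σ (r - 1) ∈ _))
  linarith

end Energy

def splice (k : ℤ) (σ τ : ℤ → ℝ) (r : ℤ) : ℝ :=
  if r ≤ k then σ r else τ r

theorem energy_splice_add_energy_splice (X : ℤ → ℝ → ℝ) (m n k : ℤ) (σ τ : ℤ → ℝ) :
    energy X m n (splice k σ τ) + energy X m n (splice k τ σ) =
      energy X m n σ + energy X m n τ := by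
  simp only [energy, ← Finset.sum_add_distrib]
  refine Finset.sum_congr rfl fun r _ => ?_
  -- at each time the two spliced sequences take the values of `σ` and `τ`, in some order
  unfold splice
  split_ifs <;> ring

theorem isPath_splice {m n m' n' k : ℤ} {s t s' t' : ℝ} {σ τ : ℤ → ℝ}
    (hσ : IsPath m n s t σ) (hτ : IsPath m' n' s' t' τ) (hmk : m - 1 ≤ k) (hkn : k ≤ n)
    (hm'k : m' - 1 ≤ k) (hkn' : k < n') (hcross : σ k ≤ τ (k + 1)) :
    IsPath m n' s t' (splice k σ τ) := by
  refine ⟨by simpa [splice, hmk] using hσ.1,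
    by simpa [splice, show ¬n' ≤ k by omega] using hτ.2.1, fun r hr₁ hr₂ => ?_⟩
  unfold splice
  split_ifs with h₁ h₂ h₂
  · exact hσ.2.2 r hr₁ (by omega)
  · exact (show r = k by omega) ▸ hcross
  · omega
  · exact hτ.2.2 r (by omega) hr₂

theorem exists_crossing {α : Type*} [LinearOrder α] (f g : ℤ → α) {a b : ℤ} (hab : a < b)
    (ha : g a ≤ f a) (hb : f b ≤ g b) :
    ∃ k, a ≤ k ∧ k < b ∧ g k ≤ f k ∧ f (k + 1) ≤ g (k + 1) := by
  induction b, (show a + 1 ≤ b by omega) using Int.leInduction with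
  | base => exact ⟨a, le_rfl, by omega, ha, hb⟩
  | succ b _ ih =>
    rcases le_or_gt (f b) (g b) with hfg | hgf
    · obtain ⟨k, hak, hkb, hk⟩ := ih (by omega) hfg
      exact ⟨k, hak, by omega, hk⟩
    · exact ⟨b, by omega, by omega, hgf.le, hb⟩

theorem exists_isPath_exchange (X : ℤ → ℝ → ℝ) {m n : ℤ} {s t u : ℝ} (hmn : m < n)
    (htu : t ≤ u) {σ τ : ℤ → ℝ} (hσ : IsPath m n s t σ) (hτ : IsPath (m + 1) n s u τ) :
    ∃ σ' τ', IsPath m n s u σ' ∧ IsPath (m + 1) n s t τ' ∧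
      energy X m n σ' + energy X (m + 1) n τ' = energy X m n σ + energy X (m + 1) n τ := by
  have hτm : τ m = s := by simpa using hτ.1
  set τ₀ := Function.update τ (m - 1) s
  have hτ₀ : IsPath m n s u τ₀ := hτ.update_pred hmn.le
  have hτ₀m : τ₀ m = s := (Function.update_of_ne (by omega) _ _).trans hτm
  obtain ⟨k, hmk, hkn, hτσ, hστ⟩ := exists_crossing σ τ₀ (a := m) (b := n) hmn
    (hτ₀m ▸ (hσ.mem_Icc (by omega) hmn.le).1) (by rw [hσ.2.1, hτ₀.2.1]; exact htu)
  have hτ' : IsPath m n s t (splice k τ₀ σ) :=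
    isPath_splice hτ₀ hσ (by omega) (by omega) (by omega) hkn ((hσ.2.2 k (by omega) hkn).trans' hτσ)
  have hτ'm : splice k τ₀ σ m = s := by simp [splice, hmk, hτ₀m]
  refine ⟨splice k σ τ₀, splice k τ₀ σ,
    isPath_splice hσ hτ₀ (by omega) (by omega) (by omega) hkn ((hσ.2.2 k (by omega) hkn).trans hστ),
    hτ'.succ_of_apply_eq hτ'm, ?_⟩
  rw [← energy_eq_energy_succ X hmn.le (by rw [hτ'.1, hτ'm]), energy_splice_add_energy_splice,
    energy_update_pred X hmn.le hτm]

section LPP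

variable {X : ℤ → ℝ → ℝ} {m n : ℤ} {s t : ℝ}

theorem bddAbove_energy_image (hX : ∀ r, Continuous (X r)) :
    BddAbove (energy X m n '' {σ | IsPath m n s t σ}) :=
  ⟨_, forall_mem_image.2 fun _ hσ => energy_le_sum_oscillation X hX hσ⟩

theorem nonempty_energy_image (hmn : m ≤ n) (hst : s ≤ t) :
    (energy X m n '' {σ | IsPath m n s t σ}).Nonempty :=
  Nonempty.image _ (exists_isPath hmn hst)

theorem energy_le_LPP (hX : ∀ r, Continuous (X r)) {σ : ℤ → ℝ} (hσ : IsPath m n s t σ) :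
    energy X m n σ ≤ LPP X m s n t :=
  le_csSup (bddAbove_energy_image hX) (mem_image_of_mem _ hσ)

theorem LPP_succ_le (hX : ∀ r, Continuous (X r)) (hmn : m < n) (hst : s ≤ t) :
    LPP X (m + 1) s n t ≤ LPP X m s n t := by
  refine csSup_le (nonempty_energy_image (by omega) hst) (forall_mem_image.2 fun τ hτ => ?_)
  rw [← energy_update_pred X hmn.le (by simpa using hτ.1 : τ m = s)]
  exact energy_le_LPP hX (hτ.update_pred hmn.le)

theorem LPP_add_LPP_succ_le (hX : ∀ r, Continuous (X r)) {u : ℝ} (hmn : m < n) (hst : s ≤ t)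
    (htu : t ≤ u) :
    LPP X m s n t + LPP X (m + 1) s n u ≤ LPP X m s n u + LPP X (m + 1) s n t := by
  rw [LPP, LPP, ← csSup_add (nonempty_energy_image hmn.le hst) (bddAbove_energy_image hX)
    (nonempty_energy_image hmn (hst.trans htu)) (bddAbove_energy_image hX)]
  refine csSup_le ((nonempty_energy_image hmn.le hst).add
    (nonempty_energy_image hmn (hst.trans htu))) ?_
  rintro _ ⟨_, ⟨σ, hσ, rfl⟩, _, ⟨τ, hτ, rfl⟩, rfl⟩
  obtain ⟨σ', τ', hσ', hτ', henergy⟩ := exists_isPath_exchange X hmn htu hσ hτ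
  dsimp only
  rw [← henergy]
  exact add_le_add (energy_le_LPP hX hσ') (energy_le_LPP hX hτ')

end LPP

theorem lpp_vertical_increment_comparison_general
    (X : ℤ → ℝ → ℝ) (hX : ∀ r, Continuous (X r))
    (m n : ℤ) (s t u : ℝ)
    (hst : s < t) (htu : t < u) (hmn : m < n) :
    0 ≤ LPP X m s n t - LPP X (m + 1) s n t ∧
      LPP X m s n t - LPP X (m + 1) s n t ≤ LPP X m s n u - LPP X (m + 1) s n u :=
  ⟨sub_nonneg.2 (LPP_succ_le hX hmn hst.le),
    by linarith [LPP_add_LPP_succ_le hX hmn hst.le htu.le]⟩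

/-- Lemma A.4, second statement: comparison of vertical increments of last-passage
values in a continuous environment. For `0 < s < t < u` and `m < n`,
`0 ≤ L_{(m,s),(n,t)} - L_{(m+1,s),(n,t)} ≤ L_{(m,s),(n,u)} - L_{(m+1,s),(n,u)}`. -/
theorem lpp_vertical_increment_comparison
    (X : ℤ → ℝ → ℝ) (hX : ∀ r, Continuous (X r))
    (m n : ℤ) (s t u : ℝ)
    (hs : 0 < s) (hst : s < t) (htu : t < u) (hmn : m < n) :
    0 ≤ LPP X m s n t - LPP X (m + 1) s n t ∧
      LPP X m s n t - LPP X (m + 1) s n t ≤ LPP X m s n u - LPP X (m + 1) s n u :=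
  lpp_vertical_increment_comparison_general X hX m n s t u hst htu hmn
end
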